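/- arXiv:1211.4050 — 5 statements merged into one kernel-verified Lean document; each statement's English description precedes it below -/
import Mathlib

section
/- Let R and Q be two orthogonal projectors on a finite-dimensional complex Hilbert space. Then the space decomposes into an orthogonal direct sum of subspaces of dimension at most 2, each invariant under both R and Q. -/
open scoped InnerProductSpace
open Module End Submodule

/-! If `R v + Q v = μ • v`, then `span {v, R v} = span {v, Q v}`, and this plane (or line) is
invariant under both idempotents, since each of them fixes its own image. Choosing `v` to be an
eigenvector of `R + Q` inside a jointly invariant subspace `W` therefore yields a nonzero jointly
invariant block of dimension at most `2` in `W`. As `R` and `Q` are self-adjoint, the orthogonal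
complement of that block in `W` is again jointly invariant, and induction on the dimension
finishes the decomposition. -/

section Idempotent

variable {K V : Type*} [Field K] [AddCommGroup V] [Module K V] {P Q : Module.End K V}

theorem span_pair_mem_invtSubmodule (hP : IsIdempotentElem P) (v : V) :
    span K {v, P v} ∈ P.invtSubmodule := by
  rw [mem_invtSubmodule_iff_map_le, map_span, span_le, Set.image_pair,
    ← Module.End.mul_apply, hP.eq, Set.pair_eq_singleton]
  exact Set.singleton_subset_iff.2 (subset_span (by simp))

theorem span_pair_le_of_add_apply_eq_smul {v : V} {μ : K} (hv : P v + Q v = μ • v) :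
    span K {v, P v} ≤ span K {v, Q v} := by
  have hPv : P v = μ • v - Q v := eq_sub_of_add_eq hv
  rw [span_le, Set.insert_subset_iff, Set.singleton_subset_iff, hPv]
  exact ⟨subset_span (by simp),
    sub_mem (smul_mem _ _ (subset_span (by simp))) (subset_span (by simp))⟩

theorem span_pair_mem_invtSubmodule_inf (hP : IsIdempotentElem P) (hQ : IsIdempotentElem Q)
    {v : V} {μ : K} (hv : P v + Q v = μ • v) :
    span K {v, P v} ∈ P.invtSubmodule ⊓ Q.invtSubmodule := by
  have hspan : span K {v, P v} = span K {v, Q v} :=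
    le_antisymm (span_pair_le_of_add_apply_eq_smul hv)
      (span_pair_le_of_add_apply_eq_smul ((add_comm _ _).trans hv))
  exact ⟨span_pair_mem_invtSubmodule hP v, hspan ▸ span_pair_mem_invtSubmodule hQ v⟩

theorem finrank_span_pair_le (v w : V) : finrank K (span K {v, w}) ≤ 2 := by
  classical
  have := (finrank_span_finset_le_card (R := K) ({v, w} : Finset V)).trans Finset.card_le_two
  rwa [Set.finrank, Finset.coe_pair] at this

theorem exists_invtSubmodule_inf_finrank_le_two [IsAlgClosed K] (hP : IsIdempotentElem P)
    (hQ : IsIdempotentElem Q) {W : Submodule K V} [FiniteDimensional K W] (hW : W ≠ ⊥)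
    (hWinv : W ∈ P.invtSubmodule ⊓ Q.invtSubmodule) :
    ∃ U ≤ W, U ≠ ⊥ ∧ finrank K U ≤ 2 ∧ U ∈ P.invtSubmodule ⊓ Q.invtSubmodule := by
  have : Nontrivial W := nontrivial_iff_ne_bot.2 hW
  have hWsum : W ∈ (P + Q).invtSubmodule :=
    invtSubmodule_inf_invtSubmodule_le_invtSubmodule_add _ _ hWinv
  obtain ⟨μ, hμ⟩ := exists_eigenvalue ((P + Q).restrict hWsum)
  obtain ⟨v, hv⟩ := hμ.exists_hasEigenvector
  have hv_eq : P v + Q v = μ • (v : V) := congrArg Subtype.val hv.apply_eq_smul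
  refine ⟨span K {(v : V), P v}, ?_, ?_, finrank_span_pair_le _ _,
    span_pair_mem_invtSubmodule_inf hP hQ hv_eq⟩
  · rw [span_le, Set.insert_subset_iff, Set.singleton_subset_iff]
    exact ⟨v.2, hWinv.1 v.2⟩
  · exact (Submodule.ne_bot_iff _).2 ⟨v, subset_span (by simp), fun h => hv.2 (Subtype.ext h)⟩

end Idempotent

section Orthogonal

variable {H : Type*} [NormedAddCommGroup H] [InnerProductSpace ℂ H] [FiniteDimensional ℂ H]
  {R Q : Module.End ℂ H}

theorem exists_isOrtho_finset_finrank_le_two_sSup_eq (hR : IsIdempotentElem R) (hRs : R.IsSymmetric)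
    (hQ : IsIdempotentElem Q) (hQs : Q.IsSymmetric) (W : Submodule ℂ H)
    (hWinv : W ∈ R.invtSubmodule ⊓ Q.invtSubmodule) :
    ∃ S : Finset (Submodule ℂ H), (S : Set (Submodule ℂ H)).Pairwise (· ⟂ ·) ∧
      (∀ U ∈ S, finrank ℂ U ≤ 2 ∧ U ∈ R.invtSubmodule ⊓ Q.invtSubmodule) ∧
      sSup (S : Set (Submodule ℂ H)) = W := by
  induction hn : finrank ℂ W using Nat.strong_induction_on generalizing W with
  | _ n ih =>
  rcases eq_or_ne W ⊥ with rfl | hW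
  · exact ⟨∅, by simp, by simp, by simp⟩
  obtain ⟨U, hUW, hU, hUrank, hUinv⟩ := exists_invtSubmodule_inf_finrank_le_two hR hQ hW hWinv
  set W' := Uᗮ ⊓ W
  have hW'inv : W' ∈ R.invtSubmodule ⊓ Q.invtSubmodule :=
    ⟨invtSubmodule.inf_mem (hRs.orthogonalComplement_mem_invtSubmodule hUinv.1) hWinv.1,
      invtSubmodule.inf_mem (hQs.orthogonalComplement_mem_invtSubmodule hUinv.2) hWinv.2⟩
  have hW'W : W' < W := by
    refine lt_of_le_of_ne inf_le_right fun h => hU ?_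
    exact (orthogonal_disjoint U).eq_bot_of_le (h ▸ hUW |>.trans inf_le_left)
  obtain ⟨S, hSortho, hSsmall, hSsup⟩ :=
    ih _ (hn ▸ finrank_lt_finrank_of_lt hW'W) W' hW'inv rfl
  refine ⟨insert U S, ?_, ?_, ?_⟩
  · rw [Finset.coe_insert]
    refine hSortho.insert_of_symm fun V hV _ => ?_
    exact isOrtho_iff_le.2 ((le_sSup hV).trans (hSsup.le.trans inf_le_left)) |>.symm
  · exact Finset.forall_mem_insert _ _ _ |>.2 ⟨⟨hUrank, hUinv⟩, hSsmall⟩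
  · rw [Finset.coe_insert, sSup_insert, hSsup]
    exact sup_orthogonal_inf_of_hasOrthogonalProjection hUW

end Orthogonal

/-- Jordan's lemma: If `R` and `Q` are orthogonal projectors on a
finite-dimensional complex Hilbert space, then the space decomposes into an
orthogonal direct sum of subspaces of dimension at most 2, each invariant
under both `R` and `Q`. -/
theorem stmt0 {H : Type*} [NormedAddCommGroup H] [InnerProductSpace ℂ H]
    [FiniteDimensional ℂ H] (R Q : H →ₗ[ℂ] H)
    (hR : R ∘ₗ R = R) (hRa : LinearMap.adjoint R = R)
    (hQ : Q ∘ₗ Q = Q) (hQa : LinearMap.adjoint Q = Q) :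
    ∃ (ι : Type) (_ : Fintype ι) (_ : DecidableEq ι) (V : ι → Submodule ℂ H),
      DirectSum.IsInternal V ∧
      (∀ i j, i ≠ j → ∀ x ∈ V i, ∀ y ∈ V j, ⟪x, y⟫_ℂ = 0) ∧
      (∀ i, Module.finrank ℂ (V i) ≤ 2) ∧
      (∀ i, ∀ x ∈ V i, R x ∈ V i ∧ Q x ∈ V i) := by
  have hRs : R.IsSymmetric :=
    (R.isSymmetric_iff_isSelfAdjoint).2 (LinearMap.isSelfAdjoint_iff'.2 hRa)
  have hQs : Q.IsSymmetric :=
    (Q.isSymmetric_iff_isSelfAdjoint).2 (LinearMap.isSelfAdjoint_iff'.2 hQa)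
  obtain ⟨S, hSortho, hSsmall, hSsup⟩ := exists_isOrtho_finset_finrank_le_two_sSup_eq hR hRs hQ hQs ⊤
    ⟨invtSubmodule.top_mem R, invtSubmodule.top_mem Q⟩
  -- Reindexed by `Fin`, since `ι` must live in `Type` while `S` lives in the universe of `H`.
  let V : Fin S.card → Submodule ℂ H := fun i => S.equivFin.symm i
  have hVsmall : ∀ i, finrank ℂ (V i) ≤ 2 ∧ V i ∈ invtSubmodule R ⊓ invtSubmodule Q :=
    fun i => hSsmall _ (S.equivFin.symm i).2
  have hVortho : Pairwise (V · ⟂ V ·) := fun i j hij =>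
    hSortho (S.equivFin.symm i).2 (S.equivFin.symm j).2
      (Subtype.coe_injective.ne (S.equivFin.symm.injective.ne hij))
  have hVsup : iSup V = ⊤ :=
    (S.equivFin.symm.iSup_comp (g := Subtype.val)).trans ((sSup_eq_iSup' _).symm.trans hSsup)
  refine ⟨Fin S.card, inferInstance, inferInstance, V,
    DirectSum.isInternal_submodule_of_iSupIndep_of_iSup_eq_top
      (orthogonalFamily_iff_pairwise.2 hVortho).independent hVsup,
    fun i j hij => isOrtho_iff_inner_eq.1 (hVortho hij),
    fun i => (hVsmall i).1, fun i x hx => ⟨(hVsmall i).2.1 hx, (hVsmall i).2.2 hx⟩⟩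
end

section
/- For any d ∈ [0,1] and any natural number m ≥ 1, (1−d)·(1 − 2d(1−d))^m ≤ 1/(2md). -/
/-- For `d ∈ (0,1]` and `m ≥ 1`,
`(1−d)·(1 − 2d(1−d))^m ≤ 1/(2md)`. (The case `d = 0` is excluded, as the
right-hand side would be interpreted as `+∞`.) -/
theorem stmt3 (d : ℝ) (hd0 : 0 < d) (hd1 : d ≤ 1) (m : ℕ) (hm : 1 ≤ m) :
    (1 - d) * (1 - 2 * d * (1 - d)) ^ m ≤ 1 / (2 * m * d) := by
  have hm' : (1:ℝ) ≤ m := by exact_mod_cast hm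
  have hb0 : (0:ℝ) ≤ 1 - 2 * d * (1 - d) := by nlinarith
  have h1 : (1 - 2 * d * (1 - d)) ≤ Real.exp (-(2 * d * (1 - d))) := by
    have := Real.add_one_le_exp (-(2 * d * (1 - d))); linarith
  have h2 : (1 - 2 * d * (1 - d)) ^ m ≤ Real.exp (-(2 * d * (1 - d))) ^ m :=
    pow_le_pow_left₀ hb0 h1 m
  rw [← Real.exp_nat_mul] at h2
  set t : ℝ := (m:ℝ) * (2 * d * (1 - d)) with ht
  have hexp : ((m:ℝ)) * -(2 * d * (1 - d)) = -t := by rw [ht]; ring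
  rw [hexp] at h2
  have ht0 : 0 ≤ t := by
    have : 0 ≤ 1 - d := by linarith
    positivity
  have hte : t ≤ Real.exp t := by
    have := Real.add_one_le_exp t; linarith
  have key : (1 - d) * Real.exp (-t) ≤ 1 / (2 * m * d) := by
    rw [le_div_iff₀ (by positivity)]
    have heq : (1 - d) * Real.exp (-t) * (2 * m * d) = t * Real.exp (-t) := by
      rw [ht]; ring
    rw [heq, Real.exp_neg]
    calc t * (Real.exp t)⁻¹ ≤ Real.exp t * (Real.exp t)⁻¹ := by
          gcongr
      _ = 1 := mul_inv_cancel₀ (Real.exp_ne_zero t)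
  calc (1 - d) * (1 - 2 * d * (1 - d)) ^ m ≤ (1 - d) * Real.exp (-t) := by
        apply mul_le_mul_of_nonneg_left h2 (by linarith)
    _ ≤ 1 / (2 * m * d) := key
end

section
/- Let (c_k) be complex numbers with ∑_k |c_k|² = 1, and (d_k) real numbers in [0,1] with d_k ≥ d_min > 0 for all k. Then for every m ≥ 1, ∑_k |c_k|² (1−d_k)(1 − 2d_k(1−d_k))^m < 1/(2 d_min m). -/
lemma stmt5_key (m : ℕ) (hm : 1 ≤ m) (x : ℝ) (hx0 : 0 < x) (hx1 : x ≤ 1) :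
    (1 - x) * (1 - 2 * x * (1 - x)) ^ m < 1 / (2 * x * m) := by
  have mpos : (0:ℝ) < m := by exact_mod_cast hm
  rcases eq_or_lt_of_le hx1 with h | hlt
  · subst h; simp; positivity
  · set t : ℝ := 2 * x * (1 - x) with ht_def
    have ht : 0 < t := by nlinarith
    have ht1 : t ≤ 1 / 2 := by nlinarith [sq_nonneg (2 * x - 1)]
    have h1 : 1 + (m:ℝ) * t ≤ (1 + t) ^ m := by
      have := one_add_mul_le_pow (a := t) (by linarith) m
      linarith
    have hpow : ((1 + t) * (1 - t)) ^ m ≤ 1 := by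
      apply pow_le_one₀ <;> nlinarith
    have h2 : (1 + (m:ℝ) * t) * (1 - t) ^ m ≤ 1 := by
      calc (1 + (m:ℝ) * t) * (1 - t) ^ m
          ≤ (1 + t) ^ m * (1 - t) ^ m :=
            mul_le_mul_of_nonneg_right h1 (pow_nonneg (by linarith) m)
        _ = ((1 + t) * (1 - t)) ^ m := (mul_pow _ _ _).symm
        _ ≤ 1 := hpow
    have h3 : (1 - t) ^ m ≤ 1 / (1 + (m:ℝ) * t) := by
      rw [le_div_iff₀ (by positivity)]
      linarith
    have h4 : 1 / (1 + (m:ℝ) * t) < 1 / ((m:ℝ) * t) :=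
      one_div_lt_one_div_of_lt (by positivity) (by linarith)
    have h5 : (1 - t) ^ m < 1 / ((m:ℝ) * t) := lt_of_le_of_lt h3 h4
    have h6 : (1 - x) * (1 - t) ^ m < (1 - x) * (1 / ((m:ℝ) * t)) :=
      mul_lt_mul_of_pos_left h5 (by linarith)
    have h7 : (1 - x) * (1 / ((m:ℝ) * t)) = 1 / (2 * x * m) := by
      rw [ht_def]
      field_simp
    linarith

/-- If `∑ₖ |cₖ|² = 1`, each `dₖ ∈ [0,1]` with `dₖ ≥ d_min > 0`,
then for every `m ≥ 1`,
`∑ₖ |cₖ|² (1−dₖ)(1 − 2dₖ(1−dₖ))^m < 1/(2 d_min m)`. -/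
theorem stmt5 {ι : Type*} [Fintype ι] (c : ι → ℂ) (d : ι → ℝ) (dmin : ℝ)
    (hnorm : ∑ k, ‖c k‖ ^ 2 = 1)
    (hd0 : ∀ k, 0 ≤ d k) (hd1 : ∀ k, d k ≤ 1)
    (hdmin : 0 < dmin) (hge : ∀ k, dmin ≤ d k)
    (m : ℕ) (hm : 1 ≤ m) :
    ∑ k, ‖c k‖ ^ 2 * (1 - d k) * (1 - 2 * d k * (1 - d k)) ^ m
      < 1 / (2 * dmin * m) := by
  have mpos : (0:ℝ) < m := by exact_mod_cast hm
  set B : ℝ := 1 / (2 * dmin * m) with hB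
  have hBkey : ∀ k, (1 - d k) * (1 - 2 * d k * (1 - d k)) ^ m < B := by
    intro k
    have h := stmt5_key m hm (d k) (lt_of_lt_of_le hdmin (hge k)) (hd1 k)
    have : 1 / (2 * d k * m) ≤ B := by
      rw [hB]
      apply one_div_le_one_div_of_le (by positivity)
      have := hge k
      nlinarith
    linarith
  have hwpos : ∃ k, 0 < ‖c k‖ ^ 2 := by
    by_contra h
    push_neg at h
    have : ∑ k, ‖c k‖ ^ 2 ≤ 0 := Finset.sum_nonpos (fun k _ => h k)
    linarith
  obtain ⟨k0, hk0⟩ := hwpos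
  calc ∑ k, ‖c k‖ ^ 2 * (1 - d k) * (1 - 2 * d k * (1 - d k)) ^ m
      < ∑ k, ‖c k‖ ^ 2 * B := by
        refine Finset.sum_lt_sum (fun k _ => ?_) ⟨k0, Finset.mem_univ k0, ?_⟩
        · rw [mul_assoc]
          apply mul_le_mul_of_nonneg_left (le_of_lt (hBkey k)) (by positivity)
        · rw [mul_assoc]
          exact mul_lt_mul_of_pos_left (hBkey k0) hk0
    _ = B := by rw [← Finset.sum_mul, hnorm, one_mul]
end

section
/- Let A be a positive semidefinite operator on a finite-dimensional Hilbert space and S a subspace on which A is positive definite (invertible when restricted to S). Then for every unit vector ψ ∈ S, ⟨ψ|A|ψ⟩² / ⟨ψ|A²|ψ⟩ ≥ σ_min(A|_S)² / σ_max(A|_S)², where σ_min and σ_max denote the smallest and largest singular values of A restricted to S. -/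
open scoped InnerProductSpace

/-- Let `A` be a positive semidefinite operator and `S` an
`A`-invariant subspace on which `A` is positive definite, with the restriction
`A|_S` having singular values (= eigenvalues) between `σmin > 0` and `σmax`.
Then for every unit vector `ψ ∈ S`,
`⟨ψ|A|ψ⟩² / ⟨ψ|A²|ψ⟩ ≥ σmin² / σmax²`. -/
theorem stmt7 {H : Type*} [NormedAddCommGroup H] [InnerProductSpace ℂ H]
    [FiniteDimensional ℂ H] (A : H →ₗ[ℂ] H)
    (hAa : LinearMap.adjoint A = A) (hApsd : ∀ x : H, 0 ≤ (⟪x, A x⟫_ℂ).re)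
    (S : Submodule ℂ H) (hSinv : ∀ x ∈ S, A x ∈ S)
    (σmin σmax : ℝ) (hσmin : 0 < σmin)
    (hlow : ∀ x ∈ S, σmin * ‖x‖ ^ 2 ≤ (⟪x, A x⟫_ℂ).re)
    (hhigh : ∀ x ∈ S, (⟪x, A x⟫_ℂ).re ≤ σmax * ‖x‖ ^ 2)
    (ψ : H) (hψS : ψ ∈ S) (hψ : ‖ψ‖ = 1) :
    (⟪ψ, A ψ⟫_ℂ).re ^ 2 / (⟪ψ, (A ∘ₗ A) ψ⟫_ℂ).re ≥ σmin ^ 2 / σmax ^ 2 := by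
  set a := (⟪ψ, A ψ⟫_ℂ).re with ha
  have hAψS : A ψ ∈ S := hSinv ψ hψS
  have hkey : ⟪ψ, A (A ψ)⟫_ℂ = ⟪A ψ, A ψ⟫_ℂ := by
    rw [← LinearMap.adjoint_inner_left, hAa]
  have hb : (⟪ψ, (A ∘ₗ A) ψ⟫_ℂ).re = ‖A ψ‖ ^ 2 := by
    rw [LinearMap.comp_apply, hkey]
    simpa using (inner_self_eq_norm_sq (𝕜 := ℂ) (A ψ))
  set b := (⟪ψ, (A ∘ₗ A) ψ⟫_ℂ).re with hbdef
  have halow : σmin ≤ a := by simpa [hψ] using hlow ψ hψS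
  have hahigh : a ≤ σmax := by simpa [hψ] using hhigh ψ hψS
  have hσmax : 0 < σmax := lt_of_lt_of_le hσmin (le_trans halow hahigh)
  have haAψ : a ≤ ‖A ψ‖ := by
    have := re_inner_le_norm (𝕜 := ℂ) ψ (A ψ)
    simpa [hψ] using this
  have hba : a ^ 2 ≤ b := by
    rw [hb]
    nlinarith [haAψ, lt_of_lt_of_le hσmin halow]
  have hbpos : 0 < b := lt_of_lt_of_le (by nlinarith) hba
  -- expansion: b ≤ σmax * a
  have hc2 : (⟪A ψ, A (A ψ)⟫_ℂ).re ≤ σmax * b := by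
    have := hhigh (A ψ) hAψS
    rw [hb]; exact this
  have hexp : 0 ≤ a - 2 * σmax⁻¹ * b + σmax⁻¹ ^ 2 * (⟪A ψ, A (A ψ)⟫_ℂ).re := by
    have h0 := hApsd (ψ - (σmax⁻¹ : ℂ) • A ψ)
    have hrw : ⟪ψ - (σmax⁻¹ : ℂ) • A ψ, A (ψ - (σmax⁻¹ : ℂ) • A ψ)⟫_ℂ
        = ⟪ψ, A ψ⟫_ℂ - ((σmax⁻¹ : ℝ) : ℂ) * ⟪ψ, A (A ψ)⟫_ℂ
          - ((σmax⁻¹ : ℝ) : ℂ) * ⟪A ψ, A ψ⟫_ℂ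
          + ((σmax⁻¹ ^ 2 : ℝ) : ℂ) * ⟪A ψ, A (A ψ)⟫_ℂ := by
      simp [map_sub, map_smul, inner_sub_left, inner_sub_right, inner_smul_left,
        inner_smul_right, Complex.conj_ofReal]
      ring
    rw [hrw] at h0
    have hbc1 : (⟪ψ, A (A ψ)⟫_ℂ).re = b := by rw [hbdef, LinearMap.comp_apply]
    have hbc2 : (⟪A ψ, A ψ⟫_ℂ).re = b := by rw [← hkey, hbdef, LinearMap.comp_apply]
    simp only [Complex.add_re, Complex.sub_re, Complex.re_ofReal_mul, hbc1, hbc2] at h0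
    linarith
  have hbsa : b ≤ σmax * a := by
    have h1 : σmax⁻¹ ^ 2 * (⟪A ψ, A (A ψ)⟫_ℂ).re ≤ σmax⁻¹ ^ 2 * (σmax * b) := by
      apply mul_le_mul_of_nonneg_left hc2 (by positivity)
    have h2 : σmax⁻¹ ^ 2 * (σmax * b) = σmax⁻¹ * b := by
      field_simp
    have h4 : σmax⁻¹ * b ≤ a := by linarith
    calc b = σmax * (σmax⁻¹ * b) := by field_simp
      _ ≤ σmax * a := mul_le_mul_of_nonneg_left h4 hσmax.le
  rw [ge_iff_le, div_le_div_iff₀ (by positivity) hbpos]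
  have h5 : σmin ^ 2 ≤ a * σmax := by nlinarith
  calc σmin ^ 2 * b ≤ (a * σmax) * (σmax * a) :=
        mul_le_mul h5 hbsa hbpos.le (mul_nonneg (hσmin.trans_le halow).le hσmax.le)
    _ = a ^ 2 * σmax ^ 2 := by ring
end

section
/- Let A be a positive semidefinite operator, S a subspace on which A is positive definite, ψ a unit vector in S with Aψ ≠ 0, and φ = Aψ / ‖Aψ‖. Then |⟨ψ|φ⟩|² ≥ κ(A|_S)^{−2}, where κ(A|_S) is the ratio of the largest to the smallest eigenvalue of the compression of A to S. -/
/-!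
Write `a = re ⟪ψ, A ψ⟫ ∈ [λmin, λmax]`. Since `A` is symmetric and nonnegative on the invariant
subspace `S`, Cauchy–Schwarz for the form `⟪x, A y⟫` applied to `ψ` and `Aψ` gives
`‖Aψ‖⁴ ≤ a ⟪Aψ, A Aψ⟫ ≤ a λmax ‖Aψ‖²`, so `‖Aψ‖² ≤ λmax a` and
`|⟨ψ|φ⟩|² ≥ a² / ‖Aψ‖² ≥ a / λmax ≥ λmin / λmax ≥ (λmin / λmax)²`.
-/

open scoped InnerProductSpace
open RCLike

namespace LinearMap.IsSymmetric

variable {𝕜 E : Type*} [RCLike 𝕜] [NormedAddCommGroup E] [InnerProductSpace 𝕜 E]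
  {T : E →ₗ[𝕜] E}

theorem re_inner_add_smul_map_add_smul (hT : T.IsSymmetric) (x y : E) (t : ℝ) :
    re ⟪x + (t : 𝕜) • y, T (x + (t : 𝕜) • y)⟫_𝕜 =
      re ⟪y, T y⟫_𝕜 * (t * t) + 2 * re ⟪x, T y⟫_𝕜 * t + re ⟪x, T x⟫_𝕜 := by
  have hyx : re ⟪y, T x⟫_𝕜 = re ⟪x, T y⟫_𝕜 := by
    rw [← hT, ← inner_conj_symm, conj_re]
  simp only [map_add, map_smul, inner_add_left, inner_add_right, inner_smul_left,
    inner_smul_right, conj_ofReal, re_ofReal_mul, hyx]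
  ring

theorem re_inner_map_sq_le_mul {S : Submodule 𝕜 E} (hT : T.IsSymmetric)
    (hS : ∀ x ∈ S, 0 ≤ re ⟪x, T x⟫_𝕜) {x y : E} (hx : x ∈ S) (hy : y ∈ S) :
    re ⟪x, T y⟫_𝕜 ^ 2 ≤ re ⟪x, T x⟫_𝕜 * re ⟪y, T y⟫_𝕜 := by
  have hdiscr := discrim_le_zero fun t : ℝ ↦
    hT.re_inner_add_smul_map_add_smul x y t ▸ hS _ (S.add_mem hx (S.smul_mem _ hy))
  rw [discrim] at hdiscr
  linarith

theorem norm_map_sq_le_mul_re_inner_map_self {S : Submodule 𝕜 E} (hT : T.IsSymmetric)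
    (hST : ∀ x ∈ S, T x ∈ S)
    (hS : ∀ x ∈ S, 0 ≤ re ⟪x, T x⟫_𝕜) {M : ℝ} (hM : ∀ x ∈ S, re ⟪x, T x⟫_𝕜 ≤ M * ‖x‖ ^ 2)
    {x : E} (hx : x ∈ S) : ‖T x‖ ^ 2 ≤ M * re ⟪x, T x⟫_𝕜 := by
  rcases eq_or_ne (T x) 0 with hTx | hTx
  · simp [hTx]
  have hxTTx : re ⟪x, T (T x)⟫_𝕜 = ‖T x‖ ^ 2 := by
    rw [← hT, inner_self_eq_norm_sq]
  have hCS := hT.re_inner_map_sq_le_mul hS hx (hST x hx)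
  rw [hxTTx] at hCS
  refine le_of_mul_le_mul_right ?_ (pow_pos (norm_pos_iff.2 hTx) 2)
  calc ‖T x‖ ^ 2 * ‖T x‖ ^ 2 ≤ re ⟪x, T x⟫_𝕜 * re ⟪T x, T (T x)⟫_𝕜 := by linarith
    _ ≤ re ⟪x, T x⟫_𝕜 * (M * ‖T x‖ ^ 2) := by gcongr; exacts [hS x hx, hM _ (hST x hx)]
    _ = M * re ⟪x, T x⟫_𝕜 * ‖T x‖ ^ 2 := by ring

end LinearMap.IsSymmetric

theorem stmt8_general {H : Type*} [NormedAddCommGroup H] [InnerProductSpace ℂ H]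
    [FiniteDimensional ℂ H] (A : H →ₗ[ℂ] H)
    (hAa : LinearMap.adjoint A = A)
    (S : Submodule ℂ H) (hSinv : ∀ x ∈ S, A x ∈ S)
    (lmin lmax : ℝ) (hlmin : 0 < lmin)
    (hlow : ∀ x ∈ S, lmin * ‖x‖ ^ 2 ≤ (⟪x, A x⟫_ℂ).re)
    (hhigh : ∀ x ∈ S, (⟪x, A x⟫_ℂ).re ≤ lmax * ‖x‖ ^ 2)
    (ψ : H) (hψS : ψ ∈ S) (hψ : ‖ψ‖ = 1)
    (φ : H) (hφ : φ = (‖A ψ‖⁻¹ : ℂ) • A ψ) :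
    ‖⟪ψ, φ⟫_ℂ‖ ^ 2 ≥ (lmax / lmin) ^ (-2 : ℤ) := by
  have hA : A.IsSymmetric :=
    A.isSymmetric_iff_isSelfAdjoint.2 (LinearMap.isSelfAdjoint_iff'.2 hAa)
  have hAS : ∀ x ∈ S, 0 ≤ (⟪x, A x⟫_ℂ).re := fun x hx ↦
    (by positivity : 0 ≤ lmin * ‖x‖ ^ 2).trans (hlow x hx)
  set a := (⟪ψ, A ψ⟫_ℂ).re
  have ha_low : lmin ≤ a := by simpa [hψ] using hlow ψ hψS
  have ha_high : a ≤ lmax := by simpa [hψ] using hhigh ψ hψS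
  have ha : 0 < a := hlmin.trans_le ha_low
  have hAψ : 0 < ‖A ψ‖ := norm_pos_iff.2 fun h ↦ by simp [a, h] at ha
  have hAψ_sq : ‖A ψ‖ ^ 2 ≤ lmax * a := hA.norm_map_sq_le_mul_re_inner_map_self hSinv hAS hhigh hψS
  have hφψ : ‖⟪ψ, φ⟫_ℂ‖ = ‖⟪ψ, A ψ⟫_ℂ‖ / ‖A ψ‖ := by
    rw [hφ, inner_smul_right, norm_mul, norm_inv, Complex.norm_real,
      Real.norm_of_nonneg hAψ.le, inv_mul_eq_div]
  have hlmax : 0 < lmax := ha.trans_le ha_high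
  calc (lmax / lmin) ^ (-2 : ℤ) = (lmin / lmax) ^ 2 := by simp [zpow_neg, div_pow]
    _ ≤ lmin / lmax :=
      pow_le_of_le_one (by positivity) ((div_le_one hlmax).2 (ha_low.trans ha_high)) two_ne_zero
    _ ≤ a / lmax := by gcongr
    _ = a ^ 2 / (lmax * a) := by field_simp
    _ ≤ a ^ 2 / ‖A ψ‖ ^ 2 := by gcongr
    _ ≤ ‖⟪ψ, A ψ⟫_ℂ‖ ^ 2 / ‖A ψ‖ ^ 2 := by gcongr; exact Complex.re_le_norm _
    _ = ‖⟪ψ, φ⟫_ℂ‖ ^ 2 := by rw [hφψ, div_pow]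

/-- Let `A` be positive semidefinite, `S` an `A`-invariant
subspace on which `A` is positive definite with eigenvalues of the restriction
between `λmin > 0` and `λmax`, `ψ ∈ S` a unit vector with `Aψ ≠ 0`, and
`φ = Aψ/‖Aψ‖`. Then `|⟨ψ|φ⟩|² ≥ κ(A|_S)⁻² = λmin²/λmax²`. -/
theorem stmt8 {H : Type*} [NormedAddCommGroup H] [InnerProductSpace ℂ H]
    [FiniteDimensional ℂ H] (A : H →ₗ[ℂ] H)
    (hAa : LinearMap.adjoint A = A) (hApsd : ∀ x : H, 0 ≤ (⟪x, A x⟫_ℂ).re)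
    (S : Submodule ℂ H) (hSinv : ∀ x ∈ S, A x ∈ S)
    (lmin lmax : ℝ) (hlmin : 0 < lmin)
    (hlow : ∀ x ∈ S, lmin * ‖x‖ ^ 2 ≤ (⟪x, A x⟫_ℂ).re)
    (hhigh : ∀ x ∈ S, (⟪x, A x⟫_ℂ).re ≤ lmax * ‖x‖ ^ 2)
    (ψ : H) (hψS : ψ ∈ S) (hψ : ‖ψ‖ = 1) (hAψ : A ψ ≠ 0)
    (φ : H) (hφ : φ = (‖A ψ‖⁻¹ : ℂ) • A ψ) :
    ‖⟪ψ, φ⟫_ℂ‖ ^ 2 ≥ (lmax / lmin) ^ (-2 : ℤ) :=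
  stmt8_general A hAa S hSinv lmin lmax hlmin hlow hhigh ψ hψS hψ φ hφ
end
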